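/- Let d ≥ 1, N ≥ 2, k ≥ 2 be integers, γ > 0 and c > −1 real numbers, and let x_1,…,x_k ∈ ℝ^d be pairwise distinct points with |x_r − x_l| ≤ 1 for all r < l; set σ²_{rl} = γ² ln(1/|x_r − x_l|) ≥ 0. For 1 ≤ i, j ≤ N define F_{i,j}(x_1,…,x_k) = ∑_{j_1,…,j_k=1}^N ∫_{O_N(ℝ)^k} O^{(1)}_{i,j_1} (ᵗO^{(1)}O^{(2)})_{j_1,j_2} ⋯ (ᵗO^{(k−1)}O^{(k)})_{j_{k−1},j_k} O^{(k)}_{j,j_k} · exp((1+c) ∑_{1≤r<l≤k} σ²_{rl} ((ᵗO^{(r)}O^{(l)})_{j_r,j_l})²) dO^{(1)}⋯dO^{(k)}, the integral being with respect to the product of Haar probability measures on O_N(ℝ). Then e^{−c ∑_{r<l} σ²_{rl}} ∑_{i=1}^N F_{i,i}(x_1,…,x_k) ≤ N^k ∏_{1≤r<l≤k} |x_r − x_l|^{−γ²}. -/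

import Mathlib

/-!
Summing over `i` contracts the two outer factors `O⁽¹⁾_{i,j₁}` and `O⁽ᵏ⁾_{i,jₖ}` into the entry
`(ᵗO⁽¹⁾O⁽ᵏ⁾)_{j₁,jₖ}`. Every entry of a product of orthogonal matrices lies in `[-1, 1]`, so for
each of the `N^k` index vectors `j` the remaining integrand is bounded by
`exp((1 + c) ∑_{r<l} σ²_{rl})`, using `σ²_{rl} ≥ 0` (as `|x_r - x_l| ≤ 1`) and `1 + c > 0`.
The prefactor `e^{-c ∑ σ²}` leaves `N^k e^{∑ σ²} = N^k ∏_{r<l} |x_r - x_l|^{-γ²}`.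
-/

open MeasureTheory Matrix Finset

instance matrixMeasurableSpace {m n α : Type*} [MeasurableSpace α] :
    MeasurableSpace (Matrix m n α) :=
  (inferInstance : MeasurableSpace (m → n → α))

instance matrixSecondCountableTopology {m n α : Type*} [Countable m] [Countable n]
    [TopologicalSpace α] [SecondCountableTopology α] :
    SecondCountableTopology (Matrix m n α) :=
  inferInstanceAs (SecondCountableTopology (m → n → α))

instance matrixBorelSpace {m n α : Type*} [Countable m] [Countable n] [TopologicalSpace α]
    [MeasurableSpace α] [SecondCountableTopology α] [BorelSpace α] :
    BorelSpace (Matrix m n α) :=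
  inferInstanceAs (BorelSpace (m → n → α))

namespace Matrix

variable {n : Type*} [Fintype n] [DecidableEq n]

theorem abs_apply_le_one_of_mem_orthogonalGroup {O : Matrix n n ℝ}
    (hO : O ∈ orthogonalGroup n ℝ) (i j : n) : |O i j| ≤ 1 :=
  entry_norm_bound_of_unitary hO i j

theorem abs_transpose_mul_apply_le_one {O Q : Matrix n n ℝ} (hO : O ∈ orthogonalGroup n ℝ)
    (hQ : Q ∈ orthogonalGroup n ℝ) (i j : n) : |(Oᵀ * Q) i j| ≤ 1 :=
  abs_apply_le_one_of_mem_orthogonalGroup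
    (mul_mem (transpose_mem_unitaryGroup_iff.mpr hO) hQ) i j

theorem measurableSet_orthogonalGroup :
    MeasurableSet (orthogonalGroup n ℝ : Set (Matrix n n ℝ)) :=
  isClosed_unitary.measurableSet

theorem ae_forall_mem_orthogonalGroup_pi {ι : Type*} [Fintype ι]
    (μ : Measure (Matrix n n ℝ)) [IsProbabilityMeasure μ]
    (hμ : μ (orthogonalGroup n ℝ) = 1) :
    ∀ᵐ O ∂(Measure.pi fun _ : ι => μ), ∀ r, O r ∈ orthogonalGroup n ℝ := by
  have hae : ∀ᵐ O ∂μ, O ∈ (orthogonalGroup n ℝ : Set (Matrix n n ℝ)) := by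
    rw [ae_mem_iff_measure_eq measurableSet_orthogonalGroup.nullMeasurableSet, hμ,
      measure_univ]
  exact ae_all_iff.mpr fun r => Measure.tendsto_eval_ae_ae.eventually hae

end Matrix

theorem sum_sum_mul_sq_le_sum_sum {ι : Type*} [Fintype ι] (s : ι → Finset ι)
    (w y : ι → ι → ℝ) (hw : ∀ r, ∀ l ∈ s r, 0 ≤ w r l) (hy : ∀ r l, |y r l| ≤ 1) :
    ∑ r, ∑ l ∈ s r, w r l * y r l ^ 2 ≤ ∑ r, ∑ l ∈ s r, w r l := by
  gcongr with r _ l hl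
  exact mul_le_of_le_one_right (hw r l hl) (sq_le_one_iff_abs_le_one _ |>.mpr (hy r l))

theorem sum_integral_apply_mul_apply_mul_le {n α : Type*} [Fintype n] [DecidableEq n]
    [MeasurableSpace α] {ν : Measure α} [IsProbabilityMeasure ν]
    {A B : α → Matrix n n ℝ} (hA : Measurable A) (hB : Measurable B)
    (hAO : ∀ᵐ x ∂ν, A x ∈ orthogonalGroup n ℝ) (hBO : ∀ᵐ x ∂ν, B x ∈ orthogonalGroup n ℝ)
    {g : α → ℝ} (hg : AEStronglyMeasurable g ν) {C : ℝ} (hgC : ∀ᵐ x ∂ν, |g x| ≤ C)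
    (p q : n) :
    ∑ i, ∫ x, A x i p * B x i q * g x ∂ν ≤ C := by
  have hint : ∀ i, Integrable (fun x => A x i p * B x i q * g x) ν := by
    intro i
    refine .of_bound (by fun_prop) C ?_
    filter_upwards [hAO, hBO, hgC] with x hAx hBx hgx
    rw [Real.norm_eq_abs, abs_mul, abs_mul]
    calc |A x i p| * |B x i q| * |g x| ≤ 1 * 1 * C := by
          gcongr
          exacts [abs_apply_le_one_of_mem_orthogonalGroup hAx i p,
            abs_apply_le_one_of_mem_orthogonalGroup hBx i q]
      _ = C := by ring
  have hcontract : ∀ x, ∑ i, A x i p * B x i q * g x = ((A x)ᵀ * B x) p q * g x := by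
    intro x
    simp only [mul_apply, transpose_apply, Finset.sum_mul]
  have hbound : ∀ᵐ x ∂ν, ‖((A x)ᵀ * B x) p q * g x‖ ≤ C := by
    filter_upwards [hAO, hBO, hgC] with x hAx hBx hgx
    rw [Real.norm_eq_abs, abs_mul]
    calc |((A x)ᵀ * B x) p q| * |g x| ≤ 1 * C := by
          gcongr
          exact abs_transpose_mul_apply_le_one hAx hBx p q
      _ = C := one_mul C
  rw [← integral_finsetSum _ fun i _ => hint i]
  simp only [hcontract]
  simpa using (Real.le_norm_self _).trans (norm_integral_le_of_norm_le_const hbound)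

theorem sum_sum_integral_chain_le {ι n : Type*} [Fintype ι] [DecidableEq ι] [Fintype n]
    [DecidableEq n] (μ : Measure (Matrix n n ℝ)) [IsProbabilityMeasure μ]
    (hμ : μ (orthogonalGroup n ℝ) = 1) (a b : ι) (t : Finset ι) (nx : ι → ι)
    (s : ι → Finset ι) (w : ι → ι → ℝ) (hw : ∀ r, ∀ l ∈ s r, 0 ≤ w r l) {β : ℝ} (hβ : 0 ≤ β) :
    ∑ i, ∑ jv : ι → n, ∫ O : ι → Matrix n n ℝ,
        (O a) i (jv a) * (∏ r ∈ t, ((O r)ᵀ * O (nx r)) (jv r) (jv (nx r))) * (O b) i (jv b)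
          * Real.exp (β * ∑ r, ∑ l ∈ s r, w r l * (((O r)ᵀ * O l) (jv r) (jv l)) ^ 2)
        ∂(Measure.pi fun _ => μ)
      ≤ (Fintype.card n : ℝ) ^ Fintype.card ι * Real.exp (β * ∑ r, ∑ l ∈ s r, w r l) := by
  have hO := ae_forall_mem_orthogonalGroup_pi (ι := ι) μ hμ
  rw [Finset.sum_comm]
  refine (sum_le_sum (g := fun _ => Real.exp (β * ∑ r, ∑ l ∈ s r, w r l))
    fun jv _ => ?_).trans_eq (by simp)
  have hweight : ∀ᵐ O ∂(Measure.pi fun _ => μ),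
      |(∏ r ∈ t, ((O r)ᵀ * O (nx r)) (jv r) (jv (nx r)))
        * Real.exp (β * ∑ r, ∑ l ∈ s r, w r l * (((O r)ᵀ * O l) (jv r) (jv l)) ^ 2)|
        ≤ Real.exp (β * ∑ r, ∑ l ∈ s r, w r l) := by
    filter_upwards [hO] with O hO
    have hentry : ∀ r l, |((O r)ᵀ * O l) (jv r) (jv l)| ≤ 1 := fun r l =>
      abs_transpose_mul_apply_le_one (hO r) (hO l) _ _
    rw [abs_mul, abs_prod, abs_of_pos (Real.exp_pos _)]
    refine (mul_le_mul (prod_le_one (fun _ _ => abs_nonneg _) fun r _ => hentry r (nx r))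
      (Real.exp_le_exp.mpr ?_) (Real.exp_pos _).le zero_le_one).trans_eq (one_mul _)
    exact mul_le_mul_of_nonneg_left (sum_sum_mul_sq_le_sum_sum s w _ hw hentry) hβ
  refine (sum_congr rfl fun i _ => integral_congr_ae (ae_of_all _ fun O => ?_)).trans_le
    (sum_integral_apply_mul_apply_mul_le (measurable_pi_apply a) (measurable_pi_apply b)
      (hO.mono fun O h => h a) (hO.mono fun O h => h b)
      (Continuous.measurable (by fun_prop)).aestronglyMeasurable hweight (jv a) (jv b))
  ring

theorem Real.rpow_neg_eq_exp_mul_log_one_div {r : ℝ} (hr : 0 < r) (a : ℝ) :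
    r ^ (-a) = Real.exp (a * Real.log (1 / r)) := by
  rw [Real.rpow_def_of_pos hr, one_div, Real.log_inv]
  ring_nf

/-- Upper bound on the `k`-point correlation functions of the matrix
multiplicative chaos:
`e^{−c ∑_{r<l} σ²_{rl}} ∑_i F_{i,i}(x_1,…,x_k) ≤ N^k ∏_{r<l} |x_r − x_l|^{−γ²}`. -/
theorem stmt_19 (d N k : ℕ) (hk : 2 ≤ k)
    (γ c : ℝ) (hc : -1 < c)
    (x : Fin k → EuclideanSpace ℝ (Fin d)) (hxinj : Function.Injective x)
    (hxle : ∀ r l : Fin k, r < l → ‖x r - x l‖ ≤ 1)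
    (μ : Measure (Matrix (Fin N) (Fin N) ℝ)) [IsProbabilityMeasure μ]
    (hμsupp : μ {O | O ∈ Matrix.orthogonalGroup (Fin N) ℝ} = 1)
    (σ2 : Fin k → Fin k → ℝ)
    (hσ2 : σ2 = fun r l => γ ^ 2 * Real.log (1 / ‖x r - x l‖))
    (F : Fin N → Fin N → ℝ)
    (hF : F = fun i j => ∑ jv : Fin k → Fin N,
        ∫ O : Fin k → Matrix (Fin N) (Fin N) ℝ,
          (O ⟨0, by omega⟩) i (jv ⟨0, by omega⟩)
            * (∏ r ∈ Finset.univ.filter fun r : Fin k => (r : ℕ) < k - 1,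
                ((O r)ᵀ * O (r + ⟨1, by omega⟩)) (jv r) (jv (r + ⟨1, by omega⟩)))
            * (O ⟨k - 1, by omega⟩) j (jv ⟨k - 1, by omega⟩)
            * Real.exp ((1 + c)
                * ∑ r, ∑ l ∈ Finset.univ.filter fun l => r < l,
                    σ2 r l * (((O r)ᵀ * O l) (jv r) (jv l)) ^ 2)
          ∂(Measure.pi fun _ : Fin k => μ)) :
    Real.exp (-c * ∑ r, ∑ l ∈ Finset.univ.filter fun l => r < l, σ2 r l)
        * ∑ i, F i i
      ≤ (N : ℝ) ^ k
          * ∏ r, ∏ l ∈ Finset.univ.filter fun l => r < l,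
              ‖x r - x l‖ ^ (-(γ ^ 2)) := by
  have hdist : ∀ r l : Fin k, r < l → 0 < ‖x r - x l‖ := fun r l hrl =>
    norm_pos_iff.mpr (sub_ne_zero.mpr (hxinj.ne hrl.ne))
  have hσ2_nonneg : ∀ r, ∀ l ∈ Finset.univ.filter fun l => r < l, 0 ≤ σ2 r l := by
    intro r l hl
    have hrl : r < l := (mem_filter.mp hl).2
    rw [hσ2]
    exact mul_nonneg (sq_nonneg γ)
      (Real.log_nonneg (one_le_one_div (hdist r l hrl) (hxle r l hrl)))
  set S := ∑ r, ∑ l ∈ Finset.univ.filter fun l => r < l, σ2 r l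
  have hprod : (∏ r, ∏ l ∈ Finset.univ.filter fun l => r < l,
      ‖x r - x l‖ ^ (-(γ ^ 2))) = Real.exp S := by
    simp only [S, Real.exp_sum]
    refine prod_congr rfl fun r _ => prod_congr rfl fun l hl => ?_
    rw [Real.rpow_neg_eq_exp_mul_log_one_div (hdist r l (mem_filter.mp hl).2), hσ2]
  have hF_sum : ∑ i, F i i ≤ (N : ℝ) ^ k * Real.exp ((1 + c) * S) := by
    simpa [hF] using sum_sum_integral_chain_le μ hμsupp ⟨0, by omega⟩ ⟨k - 1, by omega⟩
      _ _ _ σ2 hσ2_nonneg (by linarith)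
  calc Real.exp (-c * S) * ∑ i, F i i
      ≤ Real.exp (-c * S) * ((N : ℝ) ^ k * Real.exp ((1 + c) * S)) := by gcongr
    _ = (N : ℝ) ^ k * Real.exp S := by
      rw [mul_left_comm, ← Real.exp_add]
      ring_nf
    _ = _ := by rw [hprod]
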